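/- arXiv:2305.17099 — 2 statements merged into one kernel-verified Lean document; each statement's English description precedes it below -/
import Mathlib

section
/- Normalization of the approximate Fock state: for natural number N and real ε > 0, let ψ̃ be the sequence with ψ̃_n = (√(N!)/(N+1)) (e^{ε²/2}/ε^N) Σ_{k=0}^{N} e^{-2πikN/(N+1)} e^{-ε²/2} (ε e^{2πik/(N+1)})ⁿ / √(n!). Then ψ̃_n = 0 unless n ≡ N (mod N+1), ψ̃_N = 1, and ∥ψ̃∥² = N! Σ_{k=0}^{∞} ε^{2k(N+1)} / (k(N+1)+N)!. -/
open Complex Real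

private lemma rootsum (N n : ℕ) :
    ∑ k ∈ Finset.range (N + 1),
      (Complex.exp (2 * Real.pi * Complex.I * (((n : ℂ) - N)) / (N + 1))) ^ k
    = if n % (N + 1) = N % (N + 1) then ((N : ℂ) + 1) else 0 := by
  set ζ : ℂ := Complex.exp (2 * Real.pi * Complex.I * ((n : ℂ) - N) / (N + 1)) with hζ
  have hN1 : ((N : ℂ) + 1) ≠ 0 := by exact_mod_cast Nat.succ_ne_zero N
  by_cases h : n % (N + 1) = N % (N + 1)
  · have hmod : (N + 1 : ℤ) ∣ (N : ℤ) - n := (Nat.modEq_iff_dvd).mp h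
    obtain ⟨m, hm⟩ := hmod
    have hζ1 : ζ = 1 := by
      have key : 2 * (Real.pi : ℂ) * Complex.I * ((n : ℂ) - N) / (N + 1)
          = (-m : ℤ) * (2 * Real.pi * Complex.I) := by
        have h2 : ((N : ℂ) - n) = ((N : ℂ) + 1) * m := by
          have := congrArg (fun z : ℤ => (z : ℂ)) hm
          push_cast at this
          linear_combination this
        field_simp
        push_cast
        linear_combination (-1 : ℂ) * h2
      rw [hζ, key, Complex.exp_int_mul_two_pi_mul_I]
    simp [h, hζ1]
  · have hζne : ζ ≠ 1 := by
      intro hc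
      rw [hζ, Complex.exp_eq_one_iff] at hc
      obtain ⟨m, hm⟩ := hc
      have h2 : (2 * (Real.pi : ℂ) * Complex.I) * ((n : ℂ) - N) = (2 * Real.pi * Complex.I) * (m * ((N : ℂ) + 1)) := by
        field_simp at hm
        linear_combination (2 * (Real.pi : ℂ) * Complex.I) * hm
      have h3 : ((n : ℂ) - N) = m * ((N : ℂ) + 1) := by
        have hne : (2 * (Real.pi : ℂ) * Complex.I) ≠ 0 := by
          simp [Real.pi_ne_zero, Complex.I_ne_zero]
        exact mul_left_cancel₀ hne h2
      have h4 : (n : ℤ) - N = m * ((N : ℤ) + 1) := by exact_mod_cast h3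
      apply h
      apply (Nat.modEq_iff_dvd).mpr
      exact ⟨-m, by push_cast; linarith⟩
    have hpow : ζ ^ (N + 1) = 1 := by
      rw [hζ, ← Complex.exp_nat_mul]
      have key : ((N + 1 : ℕ) : ℂ) * (2 * Real.pi * Complex.I * ((n : ℂ) - N) / (N + 1))
          = (((n : ℤ) - N : ℤ) : ℂ) * (2 * Real.pi * Complex.I) := by
        push_cast
        field_simp
      rw [key, Complex.exp_int_mul_two_pi_mul_I]
    rw [geom_sum_eq hζne, hpow, if_neg h]
    simp

private lemma psi_eq (N : ℕ) (ε : ℝ) (hε : 0 < ε)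
    (ψ : ℕ → ℂ)
    (hψ : ∀ n, ψ n = (Real.sqrt (Nat.factorial N) : ℂ) / (N + 1) *
      (Complex.exp ((ε : ℂ) ^ 2 / 2) / (ε : ℂ) ^ N) *
      ∑ k ∈ Finset.range (N + 1),
        Complex.exp (-(2 * Real.pi * Complex.I * k * N / (N + 1))) *
          (Complex.exp (-(ε : ℂ) ^ 2 / 2) *
            ((ε : ℂ) * Complex.exp (2 * Real.pi * Complex.I * k / (N + 1))) ^ n /
            (Real.sqrt (Nat.factorial n) : ℂ))) (n : ℕ) :
    ψ n = if n % (N + 1) = N % (N + 1) then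
      (Real.sqrt (Nat.factorial N) : ℂ) * (ε : ℂ) ^ n / ((ε : ℂ) ^ N * (Real.sqrt (Nat.factorial n) : ℂ))
      else 0 := by
  have hterm : ∀ k : ℕ,
      Complex.exp (-(2 * Real.pi * Complex.I * k * N / (N + 1))) *
        (Complex.exp (-(ε : ℂ) ^ 2 / 2) *
          ((ε : ℂ) * Complex.exp (2 * Real.pi * Complex.I * k / (N + 1))) ^ n /
          (Real.sqrt (Nat.factorial n) : ℂ))
      = (Complex.exp (-(ε : ℂ) ^ 2 / 2) * (ε : ℂ) ^ n / (Real.sqrt (Nat.factorial n) : ℂ)) *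
          (Complex.exp (2 * Real.pi * Complex.I * ((n : ℂ) - N) / (N + 1))) ^ k := by
    intro k
    rw [mul_pow, ← Complex.exp_nat_mul, ← Complex.exp_nat_mul]
    rw [show Complex.exp (-(2 * (Real.pi:ℂ) * Complex.I * k * N / (N + 1))) *
        (Complex.exp (-(ε : ℂ) ^ 2 / 2) *
          ((ε : ℂ) ^ n * Complex.exp ((n:ℂ) * (2 * Real.pi * Complex.I * k / (N + 1)))) /
          (Real.sqrt (Nat.factorial n) : ℂ))
      = (Complex.exp (-(ε : ℂ) ^ 2 / 2) * (ε : ℂ) ^ n / (Real.sqrt (Nat.factorial n) : ℂ)) *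
        (Complex.exp (-(2 * (Real.pi:ℂ) * Complex.I * k * N / (N + 1))) *
          Complex.exp ((n:ℂ) * (2 * Real.pi * Complex.I * k / (N + 1)))) from by ring]
    rw [← Complex.exp_add]
    congr 2
    ring
  rw [hψ n]
  rw [Finset.sum_congr rfl (fun k _ => hterm k), ← Finset.mul_sum, rootsum N n]
  by_cases h : n % (N + 1) = N % (N + 1)
  · rw [if_pos h, if_pos h]
    have h1 : Complex.exp ((ε:ℂ)^2/2) * Complex.exp (-(ε:ℂ)^2/2) = 1 := by
      rw [← Complex.exp_add, show (ε:ℂ)^2/2 + -(ε:ℂ)^2/2 = 0 by ring, Complex.exp_zero]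
    have hN1 : ((N : ℂ) + 1) ≠ 0 := by exact_mod_cast Nat.succ_ne_zero N
    calc (Real.sqrt (Nat.factorial N) : ℂ) / (N + 1) *
          (Complex.exp ((ε : ℂ) ^ 2 / 2) / (ε : ℂ) ^ N) *
          (Complex.exp (-(ε : ℂ) ^ 2 / 2) * (ε : ℂ) ^ n / (Real.sqrt (Nat.factorial n) : ℂ) *
            ((N : ℂ) + 1))
        = ((Real.sqrt (Nat.factorial N) : ℂ) * (ε : ℂ) ^ n /
            ((ε : ℂ) ^ N * (Real.sqrt (Nat.factorial n) : ℂ))) *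
            ((Complex.exp ((ε:ℂ)^2/2) * Complex.exp (-(ε:ℂ)^2/2)) *
              (((N : ℂ) + 1) / ((N : ℂ) + 1))) := by ring
      _ = _ := by rw [h1, div_self hN1]; ring
  · rw [if_neg h, if_neg h]
    ring

theorem approx_fock_normalization (N : ℕ) (ε : ℝ) (hε : 0 < ε)
    (ψ : ℕ → ℂ)
    (hψ : ∀ n, ψ n = (Real.sqrt (Nat.factorial N) : ℂ) / (N + 1) *
      (Complex.exp ((ε : ℂ) ^ 2 / 2) / (ε : ℂ) ^ N) *
      ∑ k ∈ Finset.range (N + 1),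
        Complex.exp (-(2 * Real.pi * Complex.I * k * N / (N + 1))) *
          (Complex.exp (-(ε : ℂ) ^ 2 / 2) *
            ((ε : ℂ) * Complex.exp (2 * Real.pi * Complex.I * k / (N + 1))) ^ n /
            (Real.sqrt (Nat.factorial n) : ℂ))) :
    (∀ n, ¬ (n % (N + 1) = N % (N + 1)) → ψ n = 0)
    ∧ ψ N = 1
    ∧ (∑' n : ℕ, ‖ψ n‖ ^ 2) =
        (Nat.factorial N : ℝ) *
          ∑' k : ℕ, ε ^ (2 * k * (N + 1)) / (Nat.factorial (k * (N + 1) + N) : ℝ) := by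
  have hεn : (ε : ℂ) ≠ 0 := by exact_mod_cast hε.ne'
  have key := psi_eq N ε hε ψ hψ
  have hNm : N % (N + 1) = N := Nat.mod_eq_of_lt (Nat.lt_succ_self N)
  refine ⟨fun n hn => by rw [key n, if_neg hn], ?_, ?_⟩
  · rw [key N, if_pos rfl]
    have h1 : (Real.sqrt (Nat.factorial N) : ℂ) ≠ 0 := by
      exact_mod_cast (Real.sqrt_pos.mpr (by exact_mod_cast Nat.factorial_pos N)).ne'
    have hp : ((ε : ℂ)) ^ N ≠ 0 := pow_ne_zero _ hεn
    field_simp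
  · have hnorm : ∀ k : ℕ, ‖ψ (k * (N + 1) + N)‖ ^ 2
        = (Nat.factorial N : ℝ) *
          (ε ^ (2 * k * (N + 1)) / (Nat.factorial (k * (N + 1) + N) : ℝ)) := by
      intro k
      set n := k * (N + 1) + N with hn
      have hmod : n % (N + 1) = N % (N + 1) := by
        rw [hn, Nat.add_comm, Nat.add_mul_mod_self_right]
      rw [key n, if_pos hmod]
      have hreal : (Real.sqrt (Nat.factorial N) : ℂ) * (ε : ℂ) ^ n /
          ((ε : ℂ) ^ N * (Real.sqrt (Nat.factorial n) : ℂ))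
          = ((Real.sqrt (Nat.factorial N) * ε ^ n / (ε ^ N * Real.sqrt (Nat.factorial n)) : ℝ) : ℂ) := by
        push_cast
        ring
      rw [hreal, Complex.norm_real, Real.norm_eq_abs, _root_.sq_abs]
      rw [div_pow, mul_pow, mul_pow]
      rw [Real.sq_sqrt (by positivity), Real.sq_sqrt (by positivity)]
      rw [← pow_mul, ← pow_mul]
      have hεpow : ε ^ (n * 2) = ε ^ (2 * k * (N + 1)) * ε ^ (N * 2) := by
        rw [← pow_add]
        congr 1
        simp only [hn]
        ring
      rw [hεpow]
      have hεN : (0:ℝ) < ε ^ (N * 2) := by positivity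
      have hfn : (0:ℝ) < (Nat.factorial n : ℝ) := by exact_mod_cast Nat.factorial_pos n
      field_simp
    have hinj : Function.Injective (fun k : ℕ => k * (N + 1) + N) := by
      intro a b hab
      simp only at hab
      have h2 : a * (N + 1) = b * (N + 1) := Nat.add_right_cancel hab
      exact Nat.eq_of_mul_eq_mul_right (Nat.succ_pos N) h2
    have hsupp : Function.support (fun n => ‖ψ n‖ ^ 2) ⊆
        Set.range (fun k : ℕ => k * (N + 1) + N) := by
      intro n hn
      simp only [Function.mem_support] at hn
      by_contra hr
      apply hn
      have hmod : ¬ (n % (N + 1) = N % (N + 1)) := by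
        intro hm
        apply hr
        refine ⟨n / (N + 1), ?_⟩
        show n / (N + 1) * (N + 1) + N = n
        have hm' : n % (N + 1) = N := hm.trans hNm
        conv_rhs => rw [← Nat.div_add_mod n (N + 1)]
        rw [hm', Nat.mul_comm]
      rw [key n, if_neg hmod]
      simp
    rw [← hinj.tsum_eq hsupp]
    rw [← tsum_mul_left]
    exact tsum_congr hnorm
end

section
/- Wigner negativity of the two-photon Fock state: 4 ∫_0^∞ e^{-2r²} |8r⁴ − 8r² + 1| · r dr = 8 e^{-1} (√2 · cosh(1/√2) − 2 sinh(1/√2)) + 1. -/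
open Real MeasureTheory Set Filter

noncomputable def Gw : ℝ → ℝ := fun r => -(Real.exp (-2 * r ^ 2) * (2 * r ^ 4 + 1 / 4))

lemma hGw (r : ℝ) :
    HasDerivAt Gw (Real.exp (-2 * r ^ 2) * (8 * r ^ 4 - 8 * r ^ 2 + 1) * r) r := by
  have h1 : HasDerivAt (fun r : ℝ => -2 * r ^ 2) (-4 * r) r := by
    simpa using ((hasDerivAt_pow 2 r).const_mul (-2 : ℝ)).congr_deriv (by ring)
  have h2 := h1.exp
  have h3 : HasDerivAt (fun r : ℝ => 2 * r ^ 4 + 1 / 4) (8 * r ^ 3) r := by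
    simpa using (((hasDerivAt_pow 4 r).const_mul (2 : ℝ)).add_const (1 / 4)).congr_deriv (by ring)
  have := (h2.mul h3).neg
  refine this.congr_deriv ?_
  ring

lemma Gw_tendsto : Tendsto Gw atTop (nhds 0) := by
  have h2r : Tendsto (fun r : ℝ => 2 * r ^ 2) atTop atTop := by
    exact (tendsto_pow_atTop (by norm_num)).const_mul_atTop (by norm_num)
  have ha := (tendsto_pow_mul_exp_neg_atTop_nhds_zero 2).comp h2r
  have hb := (Real.tendsto_exp_neg_atTop_nhds_zero).comp h2r
  have hc : Tendsto (fun r : ℝ => -((1/2) * ((2*r^2)^2 * Real.exp (-(2*r^2))) + (1/4) * Real.exp (-(2*r^2)))) atTop (nhds (-((1/2) * 0 + (1/4) * 0))) :=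
    ((ha.const_mul _).add (hb.const_mul _)).neg
  have heq : Gw = fun r : ℝ => -((1/2) * ((2*r^2)^2 * Real.exp (-(2*r^2))) + (1/4) * Real.exp (-(2*r^2))) := by
    funext r
    have : -2 * r ^ 2 = -(2 * r ^ 2) := by ring
    simp only [Gw, this]
    ring
  rw [heq]
  simpa using hc

lemma gw_cont : Continuous fun r : ℝ => Real.exp (-2 * r ^ 2) * (8 * r ^ 4 - 8 * r ^ 2 + 1) * r := by
  fun_prop

lemma fw_cont : Continuous fun r : ℝ => Real.exp (-2 * r ^ 2) * |8 * r ^ 4 - 8 * r ^ 2 + 1| * r := by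
  fun_prop

set_option maxHeartbeats 1000000 in
theorem wigner_negativity_fock_two :
    4 * ∫ r in Set.Ioi (0 : ℝ), Real.exp (-2 * r ^ 2) * |8 * r ^ 4 - 8 * r ^ 2 + 1| * r =
      8 * Real.exp (-1) * (Real.sqrt 2 * Real.cosh (1 / Real.sqrt 2)
        - 2 * Real.sinh (1 / Real.sqrt 2)) + 1 := by
  set s : ℝ := Real.sqrt 2 with hs_def
  have hs0 : (0:ℝ) < s := Real.sqrt_pos.mpr (by norm_num)
  have hs : s ^ 2 = 2 := Real.sq_sqrt (by norm_num)
  have hs1 : 1 < s := by nlinarith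
  have hs2 : s < 2 := by nlinarith
  set rm : ℝ := Real.sqrt ((2 - s) / 4) with hrm_def
  set rp : ℝ := Real.sqrt ((2 + s) / 4) with hrp_def
  have hrm2 : rm ^ 2 = (2 - s) / 4 := Real.sq_sqrt (by linarith)
  have hrp2 : rp ^ 2 = (2 + s) / 4 := Real.sq_sqrt (by linarith)
  have hrm0 : 0 < rm := Real.sqrt_pos.mpr (by linarith)
  have hrp0 : 0 ≤ rp := Real.sqrt_nonneg _
  have hrmrp : rm ≤ rp := Real.sqrt_le_sqrt (by linarith)
  set g : ℝ → ℝ := fun r => Real.exp (-2 * r ^ 2) * (8 * r ^ 4 - 8 * r ^ 2 + 1) * r with hg_def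
  set f : ℝ → ℝ := fun r => Real.exp (-2 * r ^ 2) * |8 * r ^ 4 - 8 * r ^ 2 + 1| * r with hf_def
  have key : ∀ r : ℝ, 8 * r ^ 4 - 8 * r ^ 2 + 1 = 8 * (rm ^ 2 - r ^ 2) * (rp ^ 2 - r ^ 2) := by
    intro r; rw [hrm2, hrp2]; linear_combination hs / 2
  -- tail integral
  have htail_nonneg : ∀ x ∈ Ioi rp, 0 ≤ g x := by
    intro x hx
    simp only [mem_Ioi] at hx
    have hx0 : 0 ≤ x := le_trans hrp0 hx.le
    have hx2 : rp ^ 2 ≤ x ^ 2 := by nlinarith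
    have hx2' : rm ^ 2 ≤ x ^ 2 := by nlinarith
    have hp : 0 ≤ 8 * x ^ 4 - 8 * x ^ 2 + 1 := by
      rw [key x]; nlinarith
    exact mul_nonneg (mul_nonneg (Real.exp_pos _).le hp) hx0
  have htail : ∫ x in Ioi rp, g x = 0 - Gw rp :=
    integral_Ioi_of_hasDerivAt_of_nonneg' (fun x _ => hGw x) htail_nonneg Gw_tendsto
  have htail_int : IntegrableOn g (Ioi rp) :=
    integrableOn_Ioi_deriv_of_nonneg' (fun x _ => hGw x) htail_nonneg Gw_tendsto
  have hfg_tail : EqOn f g (Ioi rp) := by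
    intro x hx
    simp only [mem_Ioi] at hx
    have hx0 : 0 ≤ x := le_trans hrp0 hx.le
    have hx2 : rp ^ 2 ≤ x ^ 2 := by nlinarith
    have hx2' : rm ^ 2 ≤ x ^ 2 := by nlinarith
    have hp : 0 ≤ 8 * x ^ 4 - 8 * x ^ 2 + 1 := by rw [key x]; nlinarith
    simp only [hf_def, hg_def, abs_of_nonneg hp]
  have htail_f : ∫ x in Ioi rp, f x = 0 - Gw rp := by
    rw [setIntegral_congr_fun measurableSet_Ioi hfg_tail]; exact htail
  have htail_f_int : IntegrableOn f (Ioi rp) := htail_int.congr_fun (fun x hx => (hfg_tail hx).symm) measurableSet_Ioi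
  -- split Ioi 0 = Ioc 0 rp ∪ Ioi rp
  have hsplit1 : ∫ x in Ioi (0:ℝ), f x = (∫ x in Ioc (0:ℝ) rp, f x) + ∫ x in Ioi rp, f x := by
    rw [← Ioc_union_Ioi_eq_Ioi (le_trans hrm0.le hrmrp)]
    exact setIntegral_union Ioc_disjoint_Ioi_same measurableSet_Ioi
      (fw_cont.integrableOn_Ioc) htail_f_int
  -- split Ioc 0 rp
  have hsplit2 : ∫ x in Ioc (0:ℝ) rp, f x = (∫ x in Ioc (0:ℝ) rm, f x) + ∫ x in Ioc rm rp, f x := by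
    rw [← Ioc_union_Ioc_eq_Ioc hrm0.le hrmrp]
    exact setIntegral_union (Ioc_disjoint_Ioc_of_le le_rfl) measurableSet_Ioc
      (fw_cont.integrableOn_Ioc) (fw_cont.integrableOn_Ioc)
  -- piece 1 : on Ioc 0 rm, f = g
  have hpiece1 : ∫ x in Ioc (0:ℝ) rm, f x = Gw rm - Gw 0 := by
    rw [setIntegral_congr_fun measurableSet_Ioc (g := g) ?_]
    · rw [← intervalIntegral.integral_of_le hrm0.le]
      exact intervalIntegral.integral_eq_sub_of_hasDerivAt (fun x _ => hGw x)
        (gw_cont.intervalIntegrable _ _)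
    · intro x hx
      obtain ⟨hx1, hx2⟩ := hx
      have hx0 : 0 ≤ x := hx1.le
      have h2 : x ^ 2 ≤ rm ^ 2 := by nlinarith
      have h2' : x ^ 2 ≤ rp ^ 2 := by nlinarith
      have hp : 0 ≤ 8 * x ^ 4 - 8 * x ^ 2 + 1 := by rw [key x]; nlinarith
      simp only [hf_def, hg_def, abs_of_nonneg hp]
  -- piece 2 : on Ioc rm rp, f = -g
  have hpiece2 : ∫ x in Ioc rm rp, f x = -(Gw rp - Gw rm) := by
    rw [setIntegral_congr_fun measurableSet_Ioc (g := fun x => -g x) ?_]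
    · rw [integral_neg, ← intervalIntegral.integral_of_le hrmrp]
      rw [intervalIntegral.integral_eq_sub_of_hasDerivAt (fun x _ => hGw x)
        (gw_cont.intervalIntegrable _ _)]
    · intro x hx
      obtain ⟨hx1, hx2⟩ := hx
      have hx0 : 0 ≤ x := le_trans hrm0.le hx1.le
      have h2 : rm ^ 2 ≤ x ^ 2 := by nlinarith
      have h2' : x ^ 2 ≤ rp ^ 2 := by nlinarith
      have hp : 8 * x ^ 4 - 8 * x ^ 2 + 1 ≤ 0 := by rw [key x]; nlinarith
      simp only [hf_def, hg_def, abs_of_nonpos hp]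
      ring
  -- combine
  have htotal : ∫ x in Ioi (0:ℝ), f x = 2 * Gw rm - 2 * Gw rp - Gw 0 := by
    rw [hsplit1, hsplit2, hpiece1, hpiece2, htail_f]; ring
  show 4 * ∫ x in Ioi (0:ℝ), f x = _
  rw [htotal]
  -- evaluate Gw
  have hGw0 : Gw 0 = -(1/4) := by simp [Gw]
  have hinv : 1 / s = s / 2 := by
    rw [div_eq_div_iff hs0.ne' (by norm_num : (2:ℝ) ≠ 0)]
    nlinarith
  have hGwm : Gw rm = -(Real.exp (-1) * Real.exp (s/2) * ((2 - s)/2)) := by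
    have h1 : -2 * rm ^ 2 = -1 + s/2 := by rw [hrm2]; ring
    have h2 : 2 * rm ^ 4 + 1/4 = (2 - s)/2 := by
      have : rm ^ 4 = (rm ^ 2) ^ 2 := by ring
      rw [this, hrm2]; nlinarith
    simp only [Gw, h1, h2, Real.exp_add]
  have hGwp : Gw rp = -(Real.exp (-1) * Real.exp (-(s/2)) * ((2 + s)/2)) := by
    have h1 : -2 * rp ^ 2 = -1 + -(s/2) := by rw [hrp2]; ring
    have h2 : 2 * rp ^ 4 + 1/4 = (2 + s)/2 := by
      have : rp ^ 4 = (rp ^ 2) ^ 2 := by ring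
      rw [this, hrp2]; nlinarith
    simp only [Gw, h1, h2, Real.exp_add]
  rw [hGw0, hGwm, hGwp, hinv, Real.cosh_eq, Real.sinh_eq]
  ring
end
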